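/- Let N, M be smooth time-dependent vector fields on ℝ³ satisfying ∂N/∂t + ∇×M = 0 and ∇·N = 0. Then for every smooth scalar function F(x,t) (not necessarily related to N, M), the local conservation law ∂(N·∇F)/∂t + ∇·(M×∇F − F_t N) = 0 holds. -/

import Mathlib

/-!
Expanding the three terms, `∂ₜ(N·∇F) = Nₜ·∇F + N·∇Fₜ`,
`∇·(M × ∇F) = ∇F·(∇×M) - M·(∇×∇F) = ∇F·(∇×M)` and `∇·(Fₜ N) = ∇Fₜ·N + Fₜ ∇·N`, so the
left-hand side is `∇F·(Nₜ + ∇×M) - Fₜ ∇·N = 0`. The only analytic input beyond the product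
rules is the symmetry of second derivatives of `F`, which gives both `∇×∇F = 0` and `∂ₜ∇F = ∇Fₜ`.
-/

open scoped BigOperators
open MeasureTheory

noncomputable section

abbrev V3 : Type := Fin 3 → ℝ

/-- Partial derivative of a scalar field in coordinate direction `i`. -/
noncomputable def pd (f : V3 → ℝ) (i : Fin 3) (x : V3) : ℝ :=
  fderiv ℝ f x (Pi.single i 1)

/-- Gradient of a scalar field on ℝ³. -/
noncomputable def grad3 (f : V3 → ℝ) (x : V3) : V3 := fun i => pd f i x

/-- Divergence of a vector field on ℝ³. -/
noncomputable def div3 (F : V3 → V3) (x : V3) : ℝ := ∑ i, pd (fun y => F y i) i x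

/-- Curl of a vector field on ℝ³. -/
noncomputable def curl3 (F : V3 → V3) (x : V3) : V3 :=
  ![pd (fun y => F y 2) 1 x - pd (fun y => F y 1) 2 x,
    pd (fun y => F y 0) 2 x - pd (fun y => F y 2) 0 x,
    pd (fun y => F y 1) 0 x - pd (fun y => F y 0) 1 x]

/-- Cross product in ℝ³. -/
def cross3 (a b : V3) : V3 :=
  ![a 1 * b 2 - a 2 * b 1, a 2 * b 0 - a 0 * b 2, a 0 * b 1 - a 1 * b 0]

/-- Dot product in ℝ³. -/
def dot3 (a b : V3) : ℝ := ∑ i, a i * b i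

/-- Advective derivative (F·∇)G of a vector field G along F. -/
noncomputable def advD (F G : V3 → V3) (x : V3) : V3 :=
  fun j => ∑ i, F x i * pd (fun y => G y j) i x

/-- Time partial derivative of a time-dependent vector field. -/
noncomputable def dtV (F : ℝ → V3 → V3) (t : ℝ) (x : V3) : V3 :=
  fun i => deriv (fun s => F s x i) t

/-- Time partial derivative of a time-dependent scalar field. -/
noncomputable def dtS (f : ℝ → V3 → ℝ) (t : ℝ) (x : V3) : ℝ :=
  deriv (fun s => f s x) t

/-- Smooth time-dependent vector field. -/
def SmoothTV (F : ℝ → V3 → V3) : Prop := ContDiff ℝ (⊤ : ℕ∞) (Function.uncurry F)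

/-- Smooth time-dependent scalar field. -/
def SmoothTS (f : ℝ → V3 → ℝ) : Prop := ContDiff ℝ (⊤ : ℕ∞) (Function.uncurry f)

/-- Smooth (static) vector field. -/
def SmoothV (F : V3 → V3) : Prop := ContDiff ℝ (⊤ : ℕ∞) F

/-- Smooth (static) scalar field. -/
def SmoothS (f : V3 → ℝ) : Prop := ContDiff ℝ (⊤ : ℕ∞) f

section Slices

variable {E F G : Type*} [NormedAddCommGroup E] [NormedSpace ℝ E] [NormedAddCommGroup F]
  [NormedSpace ℝ F] [NormedAddCommGroup G] [NormedSpace ℝ G]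

theorem fderiv_comp_prodMk_right_apply {f : E × F → G} {a : E} {b : F}
    (hf : DifferentiableAt ℝ f (a, b)) (v : F) :
    fderiv ℝ (fun y => f (a, y)) b v = fderiv ℝ f (a, b) (0, v) := by
  have h : HasFDerivAt (fun y => f (a, y)) ((fderiv ℝ f (a, b)).comp (.inr ℝ E F)) b :=
    hf.hasFDerivAt.comp b (hasFDerivAt_prodMk_right a b)
  rw [h.fderiv]
  rfl

theorem deriv_comp_prodMk_left {f : ℝ × F → G} {a : ℝ} {b : F}
    (hf : DifferentiableAt ℝ f (a, b)) :
    deriv (fun s => f (s, b)) a = fderiv ℝ f (a, b) (1, 0) := by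
  have h : HasFDerivAt (fun s => f (s, b)) ((fderiv ℝ f (a, b)).comp (.inl ℝ ℝ F)) a :=
    hf.hasFDerivAt.comp a (hasFDerivAt_prodMk_left a b)
  exact h.hasDerivAt.deriv

theorem fderiv_fderiv_apply_comm {f : E → G} {x : E} (hf : ContDiffAt ℝ 2 f x) (u v : E) :
    fderiv ℝ (fun y => fderiv ℝ f y u) x v = fderiv ℝ (fun y => fderiv ℝ f y v) x u := by
  have hf' : DifferentiableAt ℝ (fderiv ℝ f) x :=
    (hf.fderiv_right (m := 1) le_rfl).differentiableAt one_ne_zero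
  rw [fderiv_clm_apply hf' (differentiableAt_const u),
    fderiv_clm_apply hf' (differentiableAt_const v)]
  simpa using (hf.isSymmSndFDerivAt (by simp)).eq v u

theorem ContDiff.of_uncurry_left {n : WithTop ℕ∞} {f : E → F → G}
    (hf : ContDiff ℝ n (Function.uncurry f)) (a : E) : ContDiff ℝ n (f a) :=
  hf.comp (contDiff_const.prodMk contDiff_id)

theorem ContDiff.of_uncurry_right {n : WithTop ℕ∞} {f : E → F → G}
    (hf : ContDiff ℝ n (Function.uncurry f)) (b : F) : ContDiff ℝ n (fun a => f a b) :=
  hf.comp (contDiff_id.prodMk contDiff_const)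

end Slices

section VectorCalculus

variable {f g : V3 → ℝ} {A B : V3 → V3} {x : V3}

theorem dot3_eq_dotProduct (a b : V3) : dot3 a b = a ⬝ᵥ b := rfl

theorem pd_mul (hf : DifferentiableAt ℝ f x) (hg : DifferentiableAt ℝ g x) (i : Fin 3) :
    pd (fun y => f y * g y) i x = pd f i x * g x + f x * pd g i x := by
  simp only [pd, fderiv_fun_mul hf hg, add_apply, smul_apply, smul_eq_mul]
  ring

theorem pd_sub (hf : DifferentiableAt ℝ f x) (hg : DifferentiableAt ℝ g x) (i : Fin 3) :
    pd (fun y => f y - g y) i x = pd f i x - pd g i x := by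
  simp only [pd, fderiv_fun_sub hf hg, sub_apply]

theorem pd_pd_comm (hf : ContDiffAt ℝ 2 f x) (i j : Fin 3) :
    pd (pd f i) j x = pd (pd f j) i x :=
  fderiv_fderiv_apply_comm hf _ _

theorem curl3_grad3 (hf : ContDiffAt ℝ 2 f x) : curl3 (grad3 f) x = 0 := by
  ext i
  fin_cases i <;> simp [curl3, grad3, pd_pd_comm hf]

theorem DifferentiableAt.cross3 (hA : DifferentiableAt ℝ A x) (hB : DifferentiableAt ℝ B x) :
    DifferentiableAt ℝ (fun y => cross3 (A y) (B y)) x := by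
  have hA' := differentiableAt_pi.1 hA
  have hB' := differentiableAt_pi.1 hB
  refine differentiableAt_pi.2 fun i => ?_
  fin_cases i <;>
    simp only [_root_.cross3, Fin.zero_eta, Fin.mk_one, Fin.reduceFinMk, Matrix.cons_val_zero,
      Matrix.cons_val_one, Matrix.cons_val] <;>
    fun_prop

theorem div3_sub (hA : DifferentiableAt ℝ A x) (hB : DifferentiableAt ℝ B x) :
    div3 (fun y => A y - B y) x = div3 A x - div3 B x := by
  simp only [div3, Pi.sub_apply, ← Finset.sum_sub_distrib]
  exact Finset.sum_congr rfl fun i _ =>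
    pd_sub (differentiableAt_pi.1 hA i) (differentiableAt_pi.1 hB i) i

theorem div3_smul (hg : DifferentiableAt ℝ g x) (hA : DifferentiableAt ℝ A x) :
    div3 (fun y => g y • A y) x = dot3 (grad3 g x) (A x) + g x * div3 A x := by
  simp only [div3, dot3, grad3, Pi.smul_apply, smul_eq_mul, Finset.mul_sum,
    ← Finset.sum_add_distrib]
  exact Finset.sum_congr rfl fun i _ => pd_mul hg (differentiableAt_pi.1 hA i) i

theorem div3_cross (hA : DifferentiableAt ℝ A x) (hB : DifferentiableAt ℝ B x) :
    div3 (fun y => cross3 (A y) (B y)) x = dot3 (B x) (curl3 A x) - dot3 (A x) (curl3 B x) := by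
  have hA' := differentiableAt_pi.1 hA
  have hB' := differentiableAt_pi.1 hB
  simp only [div3, cross3, dot3, curl3, Fin.sum_univ_three, Matrix.cons_val_zero,
    Matrix.cons_val_one, Matrix.cons_val, pd_sub, pd_mul, hA', hB', DifferentiableAt.fun_mul]
  ring

end VectorCalculus

section TimeDependent

variable {F : ℝ → V3 → ℝ} {t : ℝ} {x : V3}

theorem pd_eq_fderiv_uncurry (hF : DifferentiableAt ℝ (Function.uncurry F) (t, x)) (i : Fin 3) :
    pd (F t) i x = fderiv ℝ (Function.uncurry F) (t, x) (0, Pi.single i 1) :=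
  fderiv_comp_prodMk_right_apply hF _

theorem dtS_eq_fderiv_uncurry (hF : DifferentiableAt ℝ (Function.uncurry F) (t, x)) :
    dtS F t x = fderiv ℝ (Function.uncurry F) (t, x) (1, 0) :=
  deriv_comp_prodMk_left hF

theorem ContDiff.uncurry_grad3 {m n : WithTop ℕ∞} (hF : ContDiff ℝ n (Function.uncurry F))
    (hmn : m + 1 ≤ n) : ContDiff ℝ m (Function.uncurry fun s => grad3 (F s)) := by
  have hd : Differentiable ℝ (Function.uncurry F) :=
    (hF.of_le (le_add_self.trans hmn)).differentiable one_ne_zero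
  have h : (Function.uncurry fun s => grad3 (F s))
      = fun z i => fderiv ℝ (Function.uncurry F) z (0, Pi.single i 1) := by
    funext z i
    exact pd_eq_fderiv_uncurry (hd z) i
  rw [h]
  exact contDiff_pi.2 fun i => (hF.fderiv_right hmn).clm_apply contDiff_const

theorem ContDiff.uncurry_dtS {m n : WithTop ℕ∞} (hF : ContDiff ℝ n (Function.uncurry F))
    (hmn : m + 1 ≤ n) : ContDiff ℝ m (Function.uncurry (dtS F)) := by
  have hd : Differentiable ℝ (Function.uncurry F) :=
    (hF.of_le (le_add_self.trans hmn)).differentiable one_ne_zero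
  have h : Function.uncurry (dtS F) = fun z => fderiv ℝ (Function.uncurry F) z (1, 0) := by
    funext z
    exact dtS_eq_fderiv_uncurry (hd z)
  rw [h]
  exact (hF.fderiv_right hmn).clm_apply contDiff_const

theorem dtV_grad3 (hF : ContDiff ℝ 2 (Function.uncurry F)) (t : ℝ) (x : V3) :
    dtV (fun s => grad3 (F s)) t x = grad3 (dtS F t) x := by
  set f := Function.uncurry F
  have hd : Differentiable ℝ f := hF.differentiable two_ne_zero
  have hd' (w : ℝ × V3) : Differentiable ℝ (fun z => fderiv ℝ f z w) :=
    ((hF.fderiv_right (m := 1) le_rfl).clm_apply contDiff_const).differentiable one_ne_zero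
  funext i
  calc deriv (fun s => pd (F s) i x) t
      = deriv (fun s => fderiv ℝ f (s, x) (0, Pi.single i 1)) t := by
        congr 1 with s
        exact pd_eq_fderiv_uncurry (hd _) i
    _ = fderiv ℝ (fun z => fderiv ℝ f z (0, Pi.single i 1)) (t, x) (1, 0) :=
        deriv_comp_prodMk_left (hd' _ _)
    _ = fderiv ℝ (fun z => fderiv ℝ f z (1, 0)) (t, x) (0, Pi.single i 1) :=
        fderiv_fderiv_apply_comm hF.contDiffAt _ _
    _ = pd (fun y => fderiv ℝ f (t, y) (1, 0)) i x :=
        (fderiv_comp_prodMk_right_apply (hd' _ _) _).symm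
    _ = pd (dtS F t) i x := by
        congr 1 with y
        exact (dtS_eq_fderiv_uncurry (hd _)).symm

theorem dtS_dot3 {A B : ℝ → V3 → V3} (hA : DifferentiableAt ℝ (fun s => A s x) t)
    (hB : DifferentiableAt ℝ (fun s => B s x) t) :
    dtS (fun s y => dot3 (A s y) (B s y)) t x
      = dot3 (dtV A t x) (B t x) + dot3 (A t x) (dtV B t x) := by
  have hA' := differentiableAt_pi.1 hA
  have hB' := differentiableAt_pi.1 hB
  simp only [dtS, dtV, dot3, ← Finset.sum_add_distrib]
  rw [deriv_fun_sum fun i _ => (hA' i).fun_mul (hB' i)]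
  exact Finset.sum_congr rfl fun i _ => deriv_fun_mul (hA' i) (hB' i)

end TimeDependent

theorem cheviakov_conservation_law
    (N M : ℝ → V3 → V3) (hN : SmoothTV N) (hM : SmoothTV M)
    (heq : ∀ t x, dtV N t x + curl3 (M t) x = 0)
    (hdivN : ∀ t x, div3 (N t) x = 0) :
    ∀ F : ℝ → V3 → ℝ, SmoothTS F →
      ∀ t x, dtS (fun s y => dot3 (N s y) (grad3 (F s) y)) t x
        + div3 (fun y => cross3 (M t y) (grad3 (F t) y) - dtS F t y • N t y) x = 0 := by
  intro F hF t x
  have hsucc : ((⊤ : ℕ∞) : WithTop ℕ∞) + 1 ≤ (⊤ : ℕ∞) := by exact_mod_cast le_top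
  have hne : ((⊤ : ℕ∞) : WithTop ℕ∞) ≠ 0 := by simp
  have hF2 : ContDiff ℝ 2 (Function.uncurry F) := hF.of_le (WithTop.coe_le_coe.2 le_top)
  have hgradF := hF.uncurry_grad3 hsucc
  have hNt := (hN.of_uncurry_left t).differentiable hne x
  have hMt := (hM.of_uncurry_left t).differentiable hne x
  have hgradFt := (hgradF.of_uncurry_left t).differentiable hne x
  have hdtFt := ((hF.uncurry_dtS hsucc).of_uncurry_left t).differentiable hne x
  have hdtN : dtV N t x = -curl3 (M t) x := eq_neg_of_add_eq_zero_left (heq t x)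
  rw [dtS_dot3 ((hN.of_uncurry_right x).differentiable hne t)
      ((hgradF.of_uncurry_right x).differentiable hne t), dtV_grad3 hF2,
    div3_sub (hMt.cross3 hgradFt) (hdtFt.fun_smul hNt), div3_cross hMt hgradFt,
    div3_smul hdtFt hNt, curl3_grad3 (hF2.of_uncurry_left t).contDiffAt, hdtN, hdivN]
  simp only [dot3_eq_dotProduct, neg_dotProduct, dotProduct_zero, dotProduct_comm (grad3 (F t) x),
    dotProduct_comm (grad3 (dtS F t) x)]
  ring

end
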